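/- arXiv:2509.06670 — 2 statements merged into one kernel-verified Lean document; each statement's English description precedes it below -/
import Mathlib

section
/- Let p be a prime, r ≥ 1, k ≤ n, let C be a free convolutional code of length n over Z_{p^r} with encoder G ∈ Z_{p^r}[D]^{k×n}, and let Ĝ ∈ Z_{p^r}[D]^{rk×n} be the vertical stack of the matrices G, p·G, p²·G, …, p^{r−1}·G (in this order). Then the rows of Ĝ, taken in this order, form a p-linearly independent p-generator sequence, and C = { u·Ĝ : u ∈ A((D))^{rk} }. -/
open Polynomial Matrix

/-- The canonical embedding of `R[D]` into the ring of formal Laurent series `R((D))`. -/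
noncomputable def polyToLS {R : Type*} [CommRing R] : Polynomial R →+* LaurentSeries R :=
  (HahnSeries.ofPowerSeries ℤ R).comp Polynomial.coeToPowerSeries.ringHom

/-- The convolutional code (the `R((D))`-row span) generated by a polynomial matrix. -/
def codeOf {R : Type*} [CommRing R] {k n : ℕ}
    (G : Matrix (Fin k) (Fin n) (Polynomial R)) : Set (Fin n → LaurentSeries R) :=
  { v | ∃ u : Fin k → LaurentSeries R, v = Matrix.vecMul u (G.map polyToLS) }

/-- The set of words `u · G` where `u` ranges over Laurent series vectors with all
coefficients in `A = {0, …, p-1}`. -/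
def pCodeOf (p r : ℕ) {m n : ℕ} (G : Matrix (Fin m) (Fin n) (Polynomial (ZMod (p ^ r)))) :
    Set (Fin n → LaurentSeries (ZMod (p ^ r))) :=
  { v | ∃ u : Fin m → LaurentSeries (ZMod (p ^ r)),
      (∀ t (z : ℤ), ((u t).coeff z).val < p) ∧ v = Matrix.vecMul u (G.map polyToLS) }

/-- The stack `(G, pG, …, p^{r-1}G)` of a `k × n` polynomial matrix over `ZMod (p ^ r)`,
whose block of rows `t` with `t / k = i` is `p^i · G`. -/
noncomputable def Ghat (p r : ℕ) {k n : ℕ}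
    (G : Matrix (Fin k) (Fin n) (Polynomial (ZMod (p ^ r)))) :
    Matrix (Fin (r * k)) (Fin n) (Polynomial (ZMod (p ^ r))) :=
  fun t l =>
    ((p : ZMod (p ^ r)) ^ (t.val / k)) •
      G ⟨t.val % k, Nat.mod_lt _ (Nat.pos_of_ne_zero fun hk => by
        subst hk; have := t.isLt; omega)⟩ l

/-- The rows of `v` are `p`-linearly independent: the only `p`-linear combination
(with polynomial coefficients all of whose coefficients lie in `A = {0, …, p-1}`)
equal to zero is the trivial one. -/
def PLinIndep (p r : ℕ) {m n : ℕ}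
    (v : Fin m → Fin n → Polynomial (ZMod (p ^ r))) : Prop :=
  ∀ a : Fin m → Polynomial (ZMod (p ^ r)),
    (∀ j (s : ℕ), ((a j).coeff s).val < p) →
    (∀ l, ∑ j, a j * v j l = 0) → ∀ j, a j = 0

/-- `(v 0, …, v (m-1))` is a `p`-generator sequence: `p · v i` is a `p`-linear combination
of `v (i+1), …, v (m-1)` (in particular `p · v (m-1) = 0`). -/
def PGenSeq (p r : ℕ) {m n : ℕ}
    (v : Fin m → Fin n → Polynomial (ZMod (p ^ r))) : Prop :=
  ∀ i : Fin m, ∃ a : Fin m → Polynomial (ZMod (p ^ r)),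
    (∀ j (s : ℕ), ((a j).coeff s).val < p) ∧
    (∀ j, j ≤ i → a j = 0) ∧
    ∀ l, (p : ZMod (p ^ r)) • v i l = ∑ j, a j * v j l

/-- `p`-linear independence for constant vectors in `(ZMod (p ^ r))^n`, with coefficients
in `A = {0, …, p-1}`. -/
def PLinIndepConst (p r : ℕ) {m n : ℕ} (v : Fin m → Fin n → ZMod (p ^ r)) : Prop :=
  ∀ a : Fin m → ZMod (p ^ r), (∀ j, (a j).val < p) →
    (∀ l, ∑ j, a j * v j l = 0) → ∀ j, a j = 0


/-! ### Auxiliary lemmas -/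

lemma polyToLS_injective {R : Type*} [CommRing R] :
    Function.Injective (polyToLS (R := R)) := by
  intro a b h
  have := HahnSeries.ofPowerSeries_injective h
  exact Polynomial.coe_injective (R := R) this

lemma polyToLS_C {R : Type*} [CommRing R] (c : R) :
    polyToLS (Polynomial.C c) = HahnSeries.C c := by
  show (HahnSeries.ofPowerSeries ℤ R) (Polynomial.coeToPowerSeries.ringHom (Polynomial.C c)) = _
  rw [show Polynomial.coeToPowerSeries.ringHom (Polynomial.C c) = PowerSeries.C c from
    Polynomial.coe_C c]
  exact HahnSeries.ofPowerSeries_C c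

lemma polyToLS_smul {R : Type*} [CommRing R] (c : R) (q : Polynomial R) :
    polyToLS (c • q) = c • polyToLS q := by
  rw [Polynomial.smul_eq_C_mul, _root_.map_mul, polyToLS_C, HahnSeries.C_mul_eq_smul]

lemma nat_digit_sum (p : ℕ) : ∀ (r N : ℕ),
    ∑ i ∈ Finset.range r, p ^ i * (N / p ^ i % p) = N % p ^ r := by
  intro r
  induction r with
  | zero => intro N; simp [Nat.mod_one]
  | succ r ih => intro N; rw [Finset.sum_range_succ, ih, Nat.mod_pow_succ]

lemma nat_digit_bound (p : ℕ) (hp : 2 ≤ p) (c : ℕ → ℕ) (hc : ∀ i, c i < p) :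
    ∀ r, ∑ i ∈ Finset.range r, p ^ i * c i < p ^ r := by
  intro r
  induction r with
  | zero => simp
  | succ r ih =>
    rw [Finset.sum_range_succ]
    have h1 : p ^ r * c r ≤ p ^ r * (p - 1) := Nat.mul_le_mul_left _ (by have := hc r; omega)
    have e1 : p ^ (r+1) = p ^ r * p := pow_succ p r
    have e2 : p ^ r * (p - 1) = p ^ r * p - p ^ r * 1 := by rw [← Nat.mul_sub]
    have e3 : p ^ r * 1 ≤ p ^ r * p := Nat.mul_le_mul_left _ (by omega)
    omega

lemma zmod_digit_unique (p r : ℕ) (hp : p.Prime) (d : ℕ → ZMod (p ^ r))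
    (hd : ∀ i, (d i).val < p)
    (h : ∑ i ∈ Finset.range r, (p : ZMod (p ^ r)) ^ i * d i = 0) :
    ∀ i, i < r → d i = 0 := by
  haveI : NeZero (p ^ r) := ⟨pow_ne_zero _ hp.ne_zero⟩
  set N : ℕ := ∑ i ∈ Finset.range r, p ^ i * (d i).val with hN
  have hcast : ((N : ℕ) : ZMod (p ^ r)) = 0 := by
    rw [hN]; push_cast
    rw [← h]
    exact Finset.sum_congr rfl fun i _ => by rw [ZMod.natCast_val, ZMod.cast_id]
  have hlt : N < p ^ r := nat_digit_bound p hp.two_le _ (fun i => hd i) r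
  have hzero : N = 0 :=
    Nat.eq_zero_of_dvd_of_lt ((ZMod.natCast_eq_zero_iff _ _).mp hcast) hlt
  intro i hi
  have h0 : p ^ i * (d i).val = 0 :=
    Finset.sum_eq_zero_iff.mp hzero i (Finset.mem_range.mpr hi)
  have hv : (d i).val = 0 :=
    (Nat.mul_eq_zero.mp h0).resolve_left (pow_ne_zero _ hp.ne_zero)
  exact (ZMod.val_eq_zero _).mp hv

lemma zmod_digit_recon (p r : ℕ) (hp : p.Prime) (c : ZMod (p ^ r)) :
    ∑ i ∈ Finset.range r, (p : ZMod (p ^ r)) ^ i * ((c.val / p ^ i % p : ℕ) : ZMod (p ^ r)) = c := by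
  haveI : NeZero (p ^ r) := ⟨pow_ne_zero _ hp.ne_zero⟩
  have h : ∑ i ∈ Finset.range r, (p : ZMod (p ^ r)) ^ i * ((c.val / p ^ i % p : ℕ) : ZMod (p ^ r))
      = ((∑ i ∈ Finset.range r, p ^ i * (c.val / p ^ i % p) : ℕ) : ZMod (p ^ r)) := by
    push_cast; rfl
  rw [h, nat_digit_sum, Nat.mod_eq_of_lt (ZMod.val_lt c), ZMod.natCast_val, ZMod.cast_id]

/-- The `i`-th `p`-ary digit of a Laurent series, coefficientwise. -/
noncomputable def digitLS (p r i : ℕ) (u : LaurentSeries (ZMod (p ^ r))) :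
    LaurentSeries (ZMod (p ^ r)) where
  coeff := fun z => (((u.coeff z).val / p ^ i % p : ℕ) : ZMod (p ^ r))
  isPWO_support' := u.isPWO_support.mono (fun z hz => by
    simp only [Function.mem_support] at hz ⊢
    intro h0; apply hz; rw [h0]; simp)

@[simp] lemma digitLS_coeff (p r i : ℕ) (u : LaurentSeries (ZMod (p ^ r))) (z : ℤ) :
    (digitLS p r i u).coeff z = (((u.coeff z).val / p ^ i % p : ℕ) : ZMod (p ^ r)) := rfl

lemma digitLS_val_lt (p r i : ℕ) (hp : p.Prime) (hr : 1 ≤ r)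
    (u : LaurentSeries (ZMod (p ^ r))) (z : ℤ) :
    ((digitLS p r i u).coeff z).val < p := by
  haveI : NeZero (p ^ r) := ⟨pow_ne_zero _ hp.ne_zero⟩
  rw [digitLS_coeff, ZMod.val_cast_of_lt]
  · exact Nat.mod_lt _ hp.pos
  · calc (u.coeff z).val / p ^ i % p < p := Nat.mod_lt _ hp.pos
      _ ≤ p ^ r := Nat.le_self_pow (by omega) p

lemma digitLS_recon (p r : ℕ) (hp : p.Prime) (u : LaurentSeries (ZMod (p ^ r))) :
    ∑ i : Fin r, (p : ZMod (p ^ r)) ^ (i : ℕ) • digitLS p r i u = u := by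
  ext z
  rw [← HahnSeries.coeff.addMonoidHom_apply, map_sum]
  simp only [HahnSeries.coeff.addMonoidHom_apply, HahnSeries.coeff_smul, digitLS_coeff,
    smul_eq_mul]
  rw [← Finset.sum_range
    (fun i => (p : ZMod (p ^ r)) ^ i * (((u.coeff z).val / p ^ i % p : ℕ) : ZMod (p ^ r)))]
  exact zmod_digit_recon p r hp _

lemma Ghat_eq (p r : ℕ) {k n : ℕ} (G : Matrix (Fin k) (Fin n) (Polynomial (ZMod (p ^ r))))
    (t : Fin (r * k)) (i j : ℕ) (hi : t.val / k = i) (hj : t.val % k = j) (hjk : j < k)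
    (l : Fin n) :
    Ghat p r G t l = ((p : ZMod (p ^ r)) ^ i) • G ⟨j, hjk⟩ l := by
  subst hi; subst hj; rfl

lemma Ghat_equiv (p r : ℕ) {k n : ℕ} (G : Matrix (Fin k) (Fin n) (Polynomial (ZMod (p ^ r))))
    (i : Fin r) (j : Fin k) (l : Fin n) :
    Ghat p r G (finProdFinEquiv (i, j)) l = ((p : ZMod (p ^ r)) ^ (i : ℕ)) • G j l := by
  have hval : ((finProdFinEquiv (i, j) : Fin (r * k))).val = j.val + k * i.val := rfl
  refine (Ghat_eq p r G _ i.val j.val ?_ ?_ j.isLt l)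
  · rw [hval, Nat.add_mul_div_left _ _ (Fin.pos j), Nat.div_eq_of_lt j.isLt, zero_add]
  · rw [hval, Nat.add_mul_mod_self_left, Nat.mod_eq_of_lt j.isLt]

/-- The key computation: for any coefficient vector `w`, `w · Ĝ = u' · G` where
`u' j = ∑ i, p^i • w (i, j)`. -/
lemma vecMul_Ghat (p r : ℕ) {k n : ℕ}
    (G : Matrix (Fin k) (Fin n) (Polynomial (ZMod (p ^ r))))
    (w : Fin (r * k) → LaurentSeries (ZMod (p ^ r))) :
    Matrix.vecMul w ((Ghat p r G).map polyToLS) =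
      Matrix.vecMul
        (fun j => ∑ i : Fin r, ((p : ZMod (p ^ r)) ^ (i : ℕ)) • w (finProdFinEquiv (i, j)))
        (G.map polyToLS) := by
  funext l
  simp only [Matrix.vecMul, dotProduct, Matrix.map_apply]
  rw [← Equiv.sum_comp (finProdFinEquiv (m := r) (n := k))
    (fun t => w t * polyToLS (Ghat p r G t l))]
  rw [Fintype.sum_prod_type, Finset.sum_comm]
  refine Finset.sum_congr rfl fun j _ => ?_
  rw [Finset.sum_mul]
  refine Finset.sum_congr rfl fun i _ => ?_
  rw [Ghat_equiv, polyToLS_smul, ← HahnSeries.C_mul_eq_smul, ← HahnSeries.C_mul_eq_smul]; ring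

theorem ghat_is_p_encoder (p r : ℕ) (hp : p.Prime) (hr : 1 ≤ r) {k n : ℕ} (hkn : k ≤ n)
    (G : Matrix (Fin k) (Fin n) (Polynomial (ZMod (p ^ r))))
    (hrows : LinearIndependent (LaurentSeries (ZMod (p ^ r))) fun i => (G.map polyToLS) i) :
    PGenSeq p r (fun t => Ghat p r G t) ∧
    PLinIndep p r (fun t => Ghat p r G t) ∧
    codeOf G = pCodeOf p r (Ghat p r G) := by
  haveI : NeZero (p ^ r) := ⟨pow_ne_zero _ hp.ne_zero⟩
  haveI : Fact (1 < p ^ r) := ⟨lt_of_lt_of_le hp.one_lt (Nat.le_self_pow (by omega) p)⟩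
  set e := finProdFinEquiv (m := r) (n := k) with he
  refine ⟨?_, ?_, ?_⟩
  · -- PGenSeq
    intro t
    have hk : 0 < k := by
      have := t.isLt
      rcases Nat.eq_zero_or_pos k with h | h
      · subst h; omega
      · exact h
    have hmod : t.val % k < k := Nat.mod_lt t.val hk
    by_cases hcase : t.val / k + 1 < r
    · have hb : t.val + k < r * k := by
        refine (Nat.div_lt_iff_lt_mul hk).mp ?_
        rw [Nat.add_div_right _ hk]
        exact hcase
      set t' : Fin (r * k) := ⟨t.val + k, hb⟩ with ht'
      refine ⟨fun j => if j = t' then 1 else 0, ?_, ?_, ?_⟩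
      · intro j s
        rcases eq_or_ne j t' with h | h
        · subst h
          simp only [if_pos rfl, Polynomial.coeff_one]
          rcases eq_or_ne s 0 with hs | hs
          · simp [Polynomial.coeff_one, hs, ZMod.val_one, hp.one_lt]
          · simp [Polynomial.coeff_one, hs, hp.pos]
        · simp [h, hp.pos]
      · intro j hj
        have : j ≠ t' := by
          intro hjt
          have : j.val = t.val + k := by rw [hjt]
          have hjv : j.val ≤ t.val := hj
          omega
        simp [this]
      · intro l
        have hrhs : (∑ j, (if j = t' then (1 : Polynomial (ZMod (p ^ r))) else 0) * Ghat p r G j l)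
            = Ghat p r G t' l := by
          rw [Finset.sum_congr rfl (fun j _ => ite_mul _ _ _ _)]
          simp [Finset.sum_ite_eq']
        show (p : ZMod (p ^ r)) • Ghat p r G t l = _
        rw [hrhs,
          Ghat_eq p r G t (t.val / k) (t.val % k) rfl rfl hmod l,
          Ghat_eq p r G t' (t.val / k + 1) (t.val % k)
            (Nat.add_div_right _ hk) (Nat.add_mod_right _ _) hmod l,
          smul_smul, pow_succ]
        ring_nf
    · refine ⟨fun _ => 0, by simp [hp.pos], fun _ _ => rfl, ?_⟩
      intro l
      have hq : t.val / k < r := (Nat.div_lt_iff_lt_mul hk).mpr t.isLt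
      show (p : ZMod (p ^ r)) • Ghat p r G t l = _
      rw [Ghat_eq p r G t (t.val / k) (t.val % k) rfl rfl hmod l, smul_smul]
      have h1 : (p : ZMod (p ^ r)) * (p : ZMod (p ^ r)) ^ (t.val / k)
          = (p : ZMod (p ^ r)) ^ r := by
        rw [← pow_succ']
        congr 1
        omega
      have h2 : ((p : ZMod (p ^ r))) ^ r = 0 := by
        rw [← Nat.cast_pow, ZMod.natCast_self]
      rw [h1, h2, zero_smul]
      simp
  · -- PLinIndep
    intro a ha hsum
    set b : Fin k → Polynomial (ZMod (p ^ r)) :=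
      fun j => ∑ i : Fin r, Polynomial.C ((p : ZMod (p ^ r)) ^ (i : ℕ)) * a (e (i, j)) with hb
    have hbG : ∀ l, ∑ j, b j * G j l = 0 := by
      intro l
      calc ∑ j, b j * G j l
          = ∑ j : Fin k, ∑ i : Fin r, a (e (i, j)) * Ghat p r G (e (i, j)) l := by
            refine Finset.sum_congr rfl fun j _ => ?_
            rw [hb, Finset.sum_mul]
            refine Finset.sum_congr rfl fun i _ => ?_
            rw [Ghat_equiv, Polynomial.smul_eq_C_mul]
            ring
        _ = ∑ t, a t * Ghat p r G t l := by
            rw [← Equiv.sum_comp e (fun t => a t * Ghat p r G t l),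
              Fintype.sum_prod_type, Finset.sum_comm]
        _ = 0 := hsum l
    have hLS : ∀ j, polyToLS (b j) = 0 := by
      refine Fintype.linearIndependent_iff.mp hrows (fun j => polyToLS (b j)) ?_
      funext l
      have : (∑ j, polyToLS (b j) • (G.map polyToLS) j) l
          = polyToLS (∑ j, b j * G j l) := by
        rw [map_sum]
        rw [Finset.sum_apply]
        refine Finset.sum_congr rfl fun j _ => ?_
        rw [Pi.smul_apply, smul_eq_mul, _root_.map_mul, Matrix.map_apply]
      rw [this, hbG l, map_zero]
      rfl
    have hbz : ∀ j, b j = 0 := fun j => polyToLS_injective (by rw [hLS j, map_zero])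
    have key : ∀ (i : Fin r) (j : Fin k), a (e (i, j)) = 0 := by
      intro i j
      ext s
      simp only [Polynomial.coeff_zero]
      set d : ℕ → ZMod (p ^ r) :=
        fun ii => if h : ii < r then (a (e (⟨ii, h⟩, j))).coeff s else 0 with hd
      have hdval : ∀ ii, (d ii).val < p := by
        intro ii
        simp only [hd]
        split_ifs with h
        · exact ha _ s
        · simp [hp.pos]
      have hdsum : ∑ ii ∈ Finset.range r, (p : ZMod (p ^ r)) ^ ii * d ii = 0 := by
        rw [Finset.sum_range (fun ii => (p : ZMod (p ^ r)) ^ ii * d ii)]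
        have : ∀ ii : Fin r, (p : ZMod (p ^ r)) ^ (ii : ℕ) * d ii
            = (p : ZMod (p ^ r)) ^ (ii : ℕ) * (a (e (ii, j))).coeff s := by
          intro ii
          simp only [hd, ii.isLt, dif_pos, Fin.eta]
        rw [Finset.sum_congr rfl fun ii _ => this ii]
        have : ∑ ii : Fin r, (p : ZMod (p ^ r)) ^ (ii : ℕ) * (a (e (ii, j))).coeff s
            = (b j).coeff s := by
          rw [hb, Polynomial.finset_sum_coeff]
          exact Finset.sum_congr rfl fun ii _ => (Polynomial.coeff_C_mul _).symm
        rw [this, hbz j, Polynomial.coeff_zero]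
      have := zmod_digit_unique p r hp d hdval hdsum i.val i.isLt
      simpa only [hd, i.isLt, dif_pos, Fin.eta] using this
    intro t
    have := key (e.symm t).1 (e.symm t).2
    rwa [Prod.mk.eta, e.apply_symm_apply] at this
  · -- codeOf = pCodeOf
    ext v
    constructor
    · rintro ⟨u, rfl⟩
      refine ⟨fun t => digitLS p r ((e.symm t).1 : ℕ) (u (e.symm t).2),
        fun t z => digitLS_val_lt p r _ hp hr _ z, ?_⟩
      rw [vecMul_Ghat]
      have hu : u = fun j => ∑ i : Fin r, ((p : ZMod (p ^ r)) ^ (i : ℕ)) •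
          (fun t => digitLS p r ((e.symm t).1 : ℕ) (u (e.symm t).2)) (e (i, j)) := by
        funext j
        simp only [e.symm_apply_apply]
        exact (digitLS_recon p r hp (u j)).symm
      conv_lhs => rw [hu]
    · rintro ⟨w, hw, rfl⟩
      exact ⟨fun j => ∑ i : Fin r, ((p : ZMod (p ^ r)) ^ (i : ℕ)) • w (e (i, j)),
        vecMul_Ghat p r G w⟩
end

section
/- Let p be a prime, r ≥ 1, k ≤ n, let G ∈ Z_{p^r}[D]^{k×n} have rows linearly independent over Z_{p^r}((D)), and let Ĝ ∈ Z_{p^r}[D]^{rk×n} be the vertical stack of G, p·G, p²·G, …, p^{r−1}·G. Then Ĝ is noncatastrophic with respect to inputs with coefficients in A (for every u ∈ A((D))^{rk}, u·Ĝ has finite weight iff u has finite weight) if and only if G is noncatastrophic (for every u ∈ Z_{p^r}((D))^k, u·G has finite weight iff u has finite weight). -/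
open Polynomial Matrix

/-- A Laurent series has finite weight iff it has finitely many nonzero coefficients. -/
def FinWt {R : Type*} [Zero R] (f : LaurentSeries R) : Prop := f.support.Finite

/-- A vector of Laurent series has finite weight iff every component does. -/
def FinWtVec {R : Type*} [Zero R] {n : ℕ} (u : Fin n → LaurentSeries R) : Prop :=
  ∀ i, FinWt (u i)

/-- A polynomial matrix is noncatastrophic if finite-weight outputs come exactly from
finite-weight inputs. -/
def Noncat {R : Type*} [CommRing R] {k n : ℕ}
    (G : Matrix (Fin k) (Fin n) (Polynomial R)) : Prop :=
  ∀ u : Fin k → LaurentSeries R,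
    FinWtVec (Matrix.vecMul u (G.map polyToLS)) ↔ FinWtVec u

-- nat digit sum
lemma natDigitSum (b : ℕ) (hb : 1 < b) (r : ℕ) (m : ℕ) :
    ∑ i ∈ Finset.range r, b ^ i * (m / b ^ i % b) = m % b ^ r := by
  induction r with
  | zero => simp [Nat.mod_one]
  | succ r ih =>
    rw [Finset.sum_range_succ, ih]
    have hbr : 0 < b ^ r := pow_pos (by omega) r
    have hd : m / b ^ r % b < b := Nat.mod_lt _ (by omega)
    have hm : m % b ^ r < b ^ r := Nat.mod_lt _ hbr
    have h2 : b ^ r * (m / b ^ r % b) + m % b ^ r < b ^ r * b := by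
      calc b ^ r * (m / b ^ r % b) + m % b ^ r < b ^ r * (m / b ^ r % b) + b ^ r := by omega
        _ = b ^ r * (m / b ^ r % b + 1) := by ring
        _ ≤ b ^ r * b := Nat.mul_le_mul_left _ (by omega)
    have h1 : m % b ^ (r + 1) = b ^ r * (m / b ^ r % b) + m % b ^ r := by
      conv_lhs => rw [← Nat.div_add_mod m (b ^ r), pow_succ]
      rw [Nat.add_mod, Nat.mul_mod_mul_left, Nat.mod_eq_of_lt (lt_of_lt_of_le hm (Nat.le_mul_of_pos_right _ (by omega))),
        Nat.mod_eq_of_lt h2]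
    omega

lemma natDigitBound (b : ℕ) (hb : 1 < b) (r : ℕ) (v : ℕ → ℕ) (hv : ∀ i, v i < b) :
    ∑ i ∈ Finset.range r, b ^ i * v i < b ^ r := by
  induction r with
  | zero => simp
  | succ r ih =>
    rw [Finset.sum_range_succ, pow_succ]
    have h1 : b ^ r * v r ≤ b ^ r * (b - 1) := Nat.mul_le_mul_left _ (by have := hv r; omega)
    have h2 : b ^ r * (b - 1) = b ^ r * b - b ^ r := by
      rw [Nat.mul_sub, Nat.mul_one]
    have h3 : b ^ r ≤ b ^ r * b := Nat.le_mul_of_pos_right _ (by omega)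
    omega


noncomputable def dgt (p r i : ℕ) (x : ZMod (p ^ r)) : ZMod (p ^ r) :=
  ((x.val / p ^ i % p : ℕ) : ZMod (p ^ r))

section
variable {p r : ℕ} (hp : p.Prime) (hr : 1 ≤ r)
include hp hr

lemma dgt_val_lt (i : ℕ) (x : ZMod (p ^ r)) : (dgt p r i x).val < p := by
  haveI : NeZero (p ^ r) := ⟨pow_ne_zero r hp.pos.ne'⟩
  have h1 : x.val / p ^ i % p < p := Nat.mod_lt _ hp.pos
  have h2 : p ≤ p ^ r := Nat.le_self_pow (by omega) p
  rw [dgt, ZMod.val_cast_of_lt (lt_of_lt_of_le h1 h2)]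
  exact h1

lemma dgt_sum (x : ZMod (p ^ r)) :
    ∑ i ∈ Finset.range r, (p : ZMod (p ^ r)) ^ i * dgt p r i x = x := by
  haveI : NeZero (p ^ r) := ⟨pow_ne_zero r hp.pos.ne'⟩
  have : ∀ i, (p : ZMod (p ^ r)) ^ i * dgt p r i x
      = ((p ^ i * (x.val / p ^ i % p) : ℕ) : ZMod (p ^ r)) := by
    intro i; rw [dgt]; push_cast; ring
  simp only [this, ← Nat.cast_sum]
  rw [natDigitSum p hp.one_lt r x.val, Nat.mod_eq_of_lt x.val_lt, ZMod.natCast_zmod_val]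

lemma dgt_unique (a : ℕ → ZMod (p ^ r)) (ha : ∀ i, (a i).val < p)
    (h : ∑ i ∈ Finset.range r, (p : ZMod (p ^ r)) ^ i * a i = 0) :
    ∀ i < r, a i = 0 := by
  haveI : NeZero (p ^ r) := ⟨pow_ne_zero r hp.pos.ne'⟩
  have hcast : ((∑ i ∈ Finset.range r, p ^ i * (a i).val : ℕ) : ZMod (p ^ r)) = 0 := by
    push_cast
    simpa only [ZMod.natCast_zmod_val] using h
  have hlt : ∑ i ∈ Finset.range r, p ^ i * (a i).val < p ^ r :=
    natDigitBound p hp.one_lt r _ fun i => ha i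
  have hdvd := (ZMod.natCast_eq_zero_iff _ _).mp hcast
  have hz : ∑ i ∈ Finset.range r, p ^ i * (a i).val = 0 :=
    Nat.eq_zero_of_dvd_of_lt hdvd hlt
  intro i hi
  have := (Finset.sum_eq_zero_iff.mp hz) i (Finset.mem_range.mpr hi)
  have hval : (a i).val = 0 := by
    have hpi : p ^ i ≠ 0 := pow_ne_zero _ hp.pos.ne'
    exact (Nat.mul_eq_zero.mp this).elim (fun h => absurd h hpi) id
  exact (ZMod.val_eq_zero _).mp hval
end

-- coefficient of a finset sum of Hahn series
lemma hahn_sum_coeff {R : Type*} [AddCommMonoid R] {ι : Type*} (s : Finset ι)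
    (f : ι → LaurentSeries R) (z : ℤ) :
    (∑ i ∈ s, f i).coeff z = ∑ i ∈ s, (f i).coeff z := by
  classical
  induction s using Finset.induction with
  | empty => simp
  | insert _ _ h ih => simp [Finset.sum_insert h, HahnSeries.coeff_add, ih]

/-- The `i`-th digit series of a Laurent series over `ZMod (p ^ r)`. -/
noncomputable def digSeries (p r i : ℕ) (x : LaurentSeries (ZMod (p ^ r))) :
    LaurentSeries (ZMod (p ^ r)) :=
  ⟨fun z => dgt p r i (x.coeff z), x.isPWO_support'.mono (by
    intro z hz
    simp only [Function.mem_support] at hz ⊢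
    intro h
    apply hz
    rw [h]
    simp [dgt])⟩

@[simp] lemma digSeries_coeff (p r i : ℕ) (x : LaurentSeries (ZMod (p ^ r))) (z : ℤ) :
    (digSeries p r i x).coeff z = dgt p r i (x.coeff z) := rfl

lemma digSeries_support (p r i : ℕ) (x : LaurentSeries (ZMod (p ^ r))) :
    (digSeries p r i x).support ⊆ x.support := by
  intro z hz
  simp only [HahnSeries.mem_support, digSeries_coeff] at hz ⊢
  intro h
  apply hz; rw [h]; simp [dgt]

lemma digSeries_sum {p r : ℕ} (hp : p.Prime) (hr : 1 ≤ r)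
    (x : LaurentSeries (ZMod (p ^ r))) :
    ∑ i ∈ Finset.range r, (p : ZMod (p ^ r)) ^ i • digSeries p r i x = x := by
  ext z
  rw [hahn_sum_coeff]
  simp only [HahnSeries.coeff_smul, digSeries_coeff, smul_eq_mul]
  exact dgt_sum hp hr (x.coeff z)

lemma smul_support {R : Type*} [CommRing R] (c : R) (x : LaurentSeries R) :
    (c • x).support ⊆ x.support := by
  intro z hz
  simp only [HahnSeries.mem_support, HahnSeries.coeff_smul] at hz ⊢
  intro h; apply hz; rw [h]; simp

lemma FinWt.of_subset {R : Type*} [Zero R] {x y : LaurentSeries R}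
    (h : x.support ⊆ y.support) (hy : FinWt y) : FinWt x := hy.subset h

lemma FinWt.smul' {R : Type*} [CommRing R] (c : R) {x : LaurentSeries R}
    (hx : FinWt x) : FinWt (c • x) := hx.subset (smul_support c x)

lemma FinWt.add' {R : Type*} [AddCommMonoid R] {x y : LaurentSeries R}
    (hx : FinWt x) (hy : FinWt y) : FinWt (x + y) := by
  apply (hx.union hy).subset
  intro z hz
  simp only [HahnSeries.mem_support, HahnSeries.coeff_add] at hz
  by_contra hc
  simp only [Set.mem_union, HahnSeries.mem_support, not_or, not_not] at hc
  exact hz (by rw [hc.1, hc.2, add_zero])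

lemma FinWt.zero' {R : Type*} [Zero R] : FinWt (0 : LaurentSeries R) := by
  rw [FinWt]; simp [HahnSeries.support_zero]

lemma finwt_sum {R : Type*} [AddCommMonoid R] {ι : Type*} (s : Finset ι)
    (f : ι → LaurentSeries R) (h : ∀ i ∈ s, FinWt (f i)) : FinWt (∑ i ∈ s, f i) := by
  classical
  induction s using Finset.induction with
  | empty => simpa [FinWt] using Set.finite_empty
  | insert _ _ hn ih =>
    rw [Finset.sum_insert hn]
    exact FinWt.add' (h _ (Finset.mem_insert_self _ _))
      (ih fun i hi => h i (Finset.mem_insert_of_mem hi))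

theorem ghat_noncat_on_A_iff_noncat (p r : ℕ) (hp : p.Prime) (hr : 1 ≤ r) {k n : ℕ}
    (hkn : k ≤ n)
    (G : Matrix (Fin k) (Fin n) (Polynomial (ZMod (p ^ r))))
    (hrows : LinearIndependent (LaurentSeries (ZMod (p ^ r))) fun i => (G.map polyToLS) i) :
    (∀ u : Fin (r * k) → LaurentSeries (ZMod (p ^ r)),
        (∀ t (z : ℤ), ((u t).coeff z).val < p) →
        (FinWtVec (Matrix.vecMul u ((Ghat p r G).map polyToLS)) ↔ FinWtVec u)) ↔
      Noncat G := by
  classical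
  haveI : NeZero (p ^ r) := ⟨pow_ne_zero r hp.pos.ne'⟩
  rcases Nat.eq_zero_or_pos k with hk | hk
  · -- degenerate case k = 0
    subst hk
    have triv : ∀ (m : ℕ) (M : Matrix (Fin (m * 0)) (Fin n) (Polynomial (ZMod (p ^ r))))
        (u : Fin (m * 0) → LaurentSeries (ZMod (p ^ r))),
        FinWtVec (Matrix.vecMul u (M.map polyToLS)) := by
      intro m M u l
      have : Matrix.vecMul u (M.map polyToLS) l = 0 := by
        simp [Matrix.vecMul, dotProduct]
      rw [FinWt, this]
      simp [HahnSeries.support_zero]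
    constructor
    · intro _ u
      constructor
      · intro _ i; exact i.elim0
      · intro _
        intro l
        have : Matrix.vecMul u (G.map polyToLS) l = 0 := by
          simp [Matrix.vecMul, dotProduct]
        rw [FinWt, this]; simp [HahnSeries.support_zero]
    · intro _ u _
      constructor
      · intro _ t; exact absurd t.isLt (by omega)
      · intro _; exact triv r (Ghat p r G) u
  -- main case
  set R := ZMod (p ^ r) with hR
  -- index embedding
  have hlt : ∀ (i : Fin r) (j : Fin k), i.val * k + j.val < r * k := by
    intro i j
    calc i.val * k + j.val < i.val * k + k := by omega
      _ = (i.val + 1) * k := by ring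
      _ ≤ r * k := Nat.mul_le_mul_right k i.isLt
  set e : Fin r → Fin k → Fin (r * k) := fun i j => ⟨i.val * k + j.val, hlt i j⟩ with he
  have ediv : ∀ i j, (e i j).val / k = i.val := by
    intro i j
    show (i.val * k + j.val) / k = i.val
    rw [add_comm, Nat.add_mul_div_right _ _ hk, Nat.div_eq_of_lt j.isLt, zero_add]
  have emod : ∀ i j, (e i j).val % k = j.val := by
    intro i j
    show (i.val * k + j.val) % k = j.val
    rw [add_comm, Nat.add_mul_mod_self_right, Nat.mod_eq_of_lt j.isLt]
  have ebij : Function.Bijective (fun x : Fin r × Fin k => e x.1 x.2) := by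
    rw [Fintype.bijective_iff_injective_and_card]
    constructor
    · rintro ⟨i1, j1⟩ ⟨i2, j2⟩ h
      have h1 : (e i1 j1).val = (e i2 j2).val := congrArg Fin.val h
      have hi : i1.val = i2.val := by rw [← ediv i1 j1, ← ediv i2 j2, h1]
      have hj : j1.val = j2.val := by rw [← emod i1 j1, ← emod i2 j2, h1]
      simp [Prod.ext_iff, Fin.ext_iff, hi, hj]
    · simp
  -- Ghat entries after mapping
  have ghat_map : ∀ (t : Fin (r * k)) (l : Fin n),
      ((Ghat p r G).map polyToLS) t l =
        (p : R) ^ (t.val / k) • (G.map polyToLS) ⟨t.val % k, Nat.mod_lt _ hk⟩ l := by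
    intro t l
    show polyToLS (Ghat p r G t l) = _
    rw [Ghat, polyToLS_smul]
    rfl
  -- the key vecMul identity
  have key : ∀ u : Fin (r * k) → LaurentSeries R,
      Matrix.vecMul u ((Ghat p r G).map polyToLS) =
        Matrix.vecMul (fun j => ∑ i : Fin r, (p : R) ^ i.val • u (e i j)) (G.map polyToLS) := by
    intro u
    funext l
    show ∑ t, u t * ((Ghat p r G).map polyToLS) t l
        = ∑ j, (∑ i : Fin r, (p : R) ^ i.val • u (e i j)) * (G.map polyToLS) j l
    rw [← Fintype.sum_bijective _ ebij _ (fun t => u t * ((Ghat p r G).map polyToLS) t l)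
      (fun _ => rfl)]
    rw [Fintype.sum_prod_type, Finset.sum_comm]
    refine Finset.sum_congr rfl fun j _ => ?_
    rw [Finset.sum_mul]
    refine Finset.sum_congr rfl fun i _ => ?_
    have hGj : (⟨(e i j).val % k, Nat.mod_lt _ hk⟩ : Fin k) = j := Fin.ext (emod i j)
    show u (e i j) * ((Ghat p r G).map polyToLS) (e i j) l = _
    rw [ghat_map, ediv i j, hGj, ← HahnSeries.single_zero_mul_eq_smul,
      ← HahnSeries.single_zero_mul_eq_smul]
    ring
  constructor
  · -- Ghat noncat on A → G noncat
    intro H u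
    set uh : Fin (r * k) → LaurentSeries R :=
      fun t => digSeries p r (t.val / k) (u ⟨t.val % k, Nat.mod_lt _ hk⟩) with huh
    have hA : ∀ t (z : ℤ), ((uh t).coeff z).val < p := fun t z => dgt_val_lt hp hr _ _
    have huhe : ∀ (i : Fin r) (j : Fin k), uh (e i j) = digSeries p r i.val (u j) := by
      intro i j
      simp only [huh, ediv i j, emod i j]
    have hv : (fun j => ∑ i : Fin r, (p : R) ^ i.val • uh (e i j)) = u := by
      funext j
      calc ∑ i : Fin r, (p : R) ^ i.val • uh (e i j)
          = ∑ i ∈ Finset.range r, (p : R) ^ i • digSeries p r i (u j) := by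
            rw [← Fin.sum_univ_eq_sum_range (fun i => (p : R) ^ i • digSeries p r i (u j)) r]
            exact Finset.sum_congr rfl fun i _ => by rw [huhe]
        _ = u j := digSeries_sum hp hr (u j)
    have h1 := H uh hA
    rw [key uh, hv] at h1
    rw [h1]
    constructor
    · intro h j
      rw [FinWt, ← digSeries_sum hp hr (u j)]
      apply finwt_sum
      intro i hi
      apply FinWt.smul'
      have hi' : i < r := Finset.mem_range.mp hi
      have := h (e ⟨i, hi'⟩ j)
      rwa [huhe] at this
    · intro h t
      exact FinWt.of_subset (digSeries_support _ _ _ _) (h _)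
  · -- G noncat → Ghat noncat on A
    intro hG u hA
    rw [key u]
    set v : Fin k → LaurentSeries R := fun j => ∑ i : Fin r, (p : R) ^ i.val • u (e i j)
      with hvdef
    refine (hG v).trans ?_
    constructor
    · intro h t
      have hik : (t.val / k) < r := (Nat.div_lt_iff_lt_mul hk).mpr (by have := t.isLt; omega)
      have het : e ⟨t.val / k, hik⟩ ⟨t.val % k, Nat.mod_lt _ hk⟩ = t := by
        apply Fin.ext
        show t.val / k * k + t.val % k = t.val
        rw [mul_comm]; exact Nat.div_add_mod t.val k
      refine FinWt.of_subset ?_ (h ⟨t.val % k, Nat.mod_lt _ hk⟩)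
      intro z hz
      simp only [HahnSeries.mem_support] at hz ⊢
      intro hvz
      apply hz
      set a : ℕ → R := fun i' =>
        if hi' : i' < r then (u (e ⟨i', hi'⟩ ⟨t.val % k, Nat.mod_lt _ hk⟩)).coeff z else 0
        with ha
      have haval : ∀ i', (a i').val < p := by
        intro i'
        by_cases hi' : i' < r
        · simp only [ha, dif_pos hi']; exact hA _ z
        · simp only [ha, dif_neg hi', ZMod.val_zero]; exact hp.pos
      have hsum : ∑ i' ∈ Finset.range r, (p : R) ^ i' * a i' = 0 := by
        rw [← hvz, hvdef, hahn_sum_coeff,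
          ← Fin.sum_univ_eq_sum_range (fun i' => (p : R) ^ i' * a i') r]
        refine Finset.sum_congr rfl fun i _ => ?_
        simp only [ha, dif_pos i.isLt, HahnSeries.coeff_smul, smul_eq_mul]
      have h0 : a (t.val / k) = 0 := dgt_unique hp hr a haval hsum _ hik
      have h2 : a (t.val / k) = (u t).coeff z := by
        simp only [ha, dif_pos hik]
        rw [het]
      rw [← h2, h0]
    · intro h j
      rw [hvdef]
      apply finwt_sum
      intro i _
      exact FinWt.smul' _ (h (e i j))
end
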